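/- Fix δ > 0 and set ω(δ) = sup_{s ∈ [0,δ]} s · max(0, −κ(s)). Then for every r ≥ 0 with r ≠ R₁ and every χ ∈ [0,1] such that χ = 1 whenever r ≥ δ, one has 4 f''(r) χ² − r κ(r) f'(r) ≤ −2c f(r) + ω(δ) + 2c f(δ). -/

import Mathlib

open MeasureTheory Real Set
open scoped RealInnerProductSpace

/-- `φ(r) = exp(−(1/4) ∫₀^r s κ₋(s) ds)` where `κ₋ = max(0, −κ)`. -/
noncomputable def phiF (κ : ℝ → ℝ) (r : ℝ) : ℝ :=
  Real.exp (-(1 / 4) * ∫ s in (0:ℝ)..r, s * max 0 (-κ s))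

/-- `Φ(r) = ∫₀^r φ(s) ds`. -/
noncomputable def PhiF (κ : ℝ → ℝ) (r : ℝ) : ℝ := ∫ s in (0:ℝ)..r, phiF κ s

/-- `R₀ = inf {s ≥ 0 : κ(r) ≥ 0 for all r ≥ s}`. -/
noncomputable def R0 (κ : ℝ → ℝ) : ℝ := sInf {s : ℝ | 0 ≤ s ∧ ∀ r, s ≤ r → 0 ≤ κ r}

/-- `R₁ = inf {s ≥ R₀ : s(s − R₀)κ(r) ≥ 8 for all r ≥ s}`. -/
noncomputable def R1 (κ : ℝ → ℝ) : ℝ :=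
  sInf {s : ℝ | R0 κ ≤ s ∧ ∀ r, s ≤ r → 8 ≤ s * (s - R0 κ) * κ r}

/-- `c = (∫₀^{R₁} Φ(s) φ(s)⁻¹ ds)⁻¹`. -/
noncomputable def cF (κ : ℝ → ℝ) : ℝ := (∫ s in (0:ℝ)..R1 κ, PhiF κ s / phiF κ s)⁻¹

/-- `g(r) = 1 − (c/2) ∫₀^{min(r,R₁)} Φ(s) φ(s)⁻¹ ds`. -/
noncomputable def gF (κ : ℝ → ℝ) (r : ℝ) : ℝ :=
  1 - cF κ / 2 * ∫ s in (0:ℝ)..min r (R1 κ), PhiF κ s / phiF κ s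

/-- `f(r) = ∫₀^r φ(s) g(s) ds`. -/
noncomputable def fF (κ : ℝ → ℝ) (r : ℝ) : ℝ := ∫ s in (0:ℝ)..r, phiF κ s * gF κ s

/-!
For `r < R₁` one has `(φ g)' = -¼ r κ₋ φ g - (c/2) Φ`. Where `χ` may be small (`r < δ`) the
left-hand side is therefore at most `r κ₋(r) φ g ≤ ω(δ)`, and `f(r) ≤ f(δ)`; where `χ = 1` it is
at most `-2c Φ(r) ≤ -2c f(r)`.

For `r > R₁` both `φ` (as `κ ≥ 0` beyond `R₀`) and `g = 1/2` are locally constant, so `f'' = 0`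
and one needs `4 c f(r) ≤ r κ(r) φ(r)`. Beyond `R₀` the ratio `Q = Φ/φ` is affine of slope one,
and `Q(s) ≥ s` since `φ` is nonincreasing; hence `R₁ Q(r) ≤ r Q(R₁)` and
`(R₁ - R₀) Q(R₁) ≤ 2 ∫₀^{R₁} Q = 2/c`. Together with `f ≤ Φ = φ Q` and `R₁ (R₁ - R₀) κ(r) ≥ 8`
this is the required bound.
-/

open Filter Topology

section Primitive

variable {h : ℝ → ℝ} {a : ℝ}

theorem ContinuousOn.intervalIntegrable_of_Ici (hh : ContinuousOn h (Ici a)) {x y : ℝ}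
    (hx : a ≤ x) (hy : a ≤ y) : IntervalIntegrable h volume x y :=
  (hh.mono fun _ hz => (le_min hx hy).trans hz.1).intervalIntegrable

theorem ContinuousOn.hasDerivWithinAt_integral_Ici (hh : ContinuousOn h (Ici a)) {r : ℝ}
    (hr : a ≤ r) : HasDerivWithinAt (fun u => ∫ s in a..u, h s) (h r) (Ici a) r := by
  rcases hr.eq_or_lt with rfl | hr
  · exact intervalIntegral.integral_hasDerivWithinAt_right .refl
      ((hh.mono Ioi_subset_Ici_self).stronglyMeasurableAtFilter_nhdsWithin measurableSet_Ioi a)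
      ((hh a self_mem_Ici).mono Ioi_subset_Ici_self)
  · exact (intervalIntegral.integral_hasDerivAt_right (hh.intervalIntegrable_of_Ici le_rfl hr.le)
      ((hh.mono Ioi_subset_Ici_self).stronglyMeasurableAtFilter isOpen_Ioi r hr)
      (hh.continuousAt (Ici_mem_nhds hr))).hasDerivWithinAt

theorem ContinuousOn.continuousOn_integral_Ici (hh : ContinuousOn h (Ici a)) :
    ContinuousOn (fun u => ∫ s in a..u, h s) (Ici a) :=
  fun _ hr => (hh.hasDerivWithinAt_integral_Ici hr).continuousWithinAt

theorem ContinuousOn.monotoneOn_integral_Ici (hh : ContinuousOn h (Ici a))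
    (hnn : ∀ x, a ≤ x → 0 ≤ h x) : MonotoneOn (fun u => ∫ s in a..u, h s) (Ici a) :=
  fun _ hx _ _ hxy => intervalIntegral.integral_mono_interval le_rfl hx hxy
    (ae_restrict_of_forall_mem measurableSet_Ioc fun z hz => hnn z hz.1.le)
    (hh.intervalIntegrable_of_Ici le_rfl (le_trans hx hxy))

end Primitive

noncomputable def QF (κ : ℝ → ℝ) (r : ℝ) : ℝ := PhiF κ r / phiF κ r

noncomputable def JF (κ : ℝ → ℝ) (r : ℝ) : ℝ := ∫ s in (0:ℝ)..r, QF κ s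

section Profile

variable {κ : ℝ → ℝ}

theorem cF_eq_inv_JF : cF κ = (JF κ (R1 κ))⁻¹ := rfl

theorem gF_eq (r : ℝ) : gF κ r = 1 - cF κ / 2 * JF κ (min r (R1 κ)) := rfl

theorem continuousOn_mul_max_neg (hκ : ContinuousOn κ (Ici 0)) :
    ContinuousOn (fun s => s * max 0 (-κ s)) (Ici 0) :=
  continuousOn_id.mul ((continuous_const.max continuous_neg).comp_continuousOn hκ)

theorem mul_max_neg_nonneg {s : ℝ} (hs : 0 ≤ s) : 0 ≤ s * max 0 (-κ s) :=
  mul_nonneg hs (le_max_left _ _)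

theorem phiF_pos (κ : ℝ → ℝ) (r : ℝ) : 0 < phiF κ r := exp_pos _

theorem phiF_zero : phiF κ 0 = 1 := by simp [phiF]

theorem hasDerivWithinAt_phiF (hκ : ContinuousOn κ (Ici 0)) {r : ℝ} (hr : 0 ≤ r) :
    HasDerivWithinAt (phiF κ) (-(1 / 4) * (r * max 0 (-κ r)) * phiF κ r) (Ici 0) r := by
  convert (((continuousOn_mul_max_neg hκ).hasDerivWithinAt_integral_Ici hr).const_mul
    (-(1 / 4) : ℝ)).exp using 1
  · rfl
  · rw [phiF]
    ring

theorem continuousOn_phiF (hκ : ContinuousOn κ (Ici 0)) : ContinuousOn (phiF κ) (Ici 0) :=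
  fun _ hr => (hasDerivWithinAt_phiF hκ hr).continuousWithinAt

theorem antitoneOn_phiF (hκ : ContinuousOn κ (Ici 0)) : AntitoneOn (phiF κ) (Ici 0) :=
  fun x hx y hy hxy => exp_le_exp.2 <| mul_le_mul_of_nonpos_left
    ((continuousOn_mul_max_neg hκ).monotoneOn_integral_Ici (fun _ => mul_max_neg_nonneg)
      hx hy hxy) (by norm_num)

theorem phiF_le_one (hκ : ContinuousOn κ (Ici 0)) {r : ℝ} (hr : 0 ≤ r) : phiF κ r ≤ 1 :=
  phiF_zero (κ := κ) ▸ antitoneOn_phiF hκ self_mem_Ici hr hr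

theorem continuousOn_PhiF (hκ : ContinuousOn κ (Ici 0)) : ContinuousOn (PhiF κ) (Ici 0) :=
  (continuousOn_phiF hκ).continuousOn_integral_Ici

theorem PhiF_nonneg {r : ℝ} (hr : 0 ≤ r) : 0 ≤ PhiF κ r :=
  intervalIntegral.integral_nonneg hr fun s _ => (phiF_pos κ s).le

theorem mul_phiF_le_PhiF (hκ : ContinuousOn κ (Ici 0)) {r : ℝ} (hr : 0 ≤ r) :
    r * phiF κ r ≤ PhiF κ r := by
  simpa [PhiF, mul_comm] using intervalIntegral.integral_mono_on hr intervalIntegrable_const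
    ((continuousOn_phiF hκ).intervalIntegrable_of_Ici le_rfl hr)
    fun s hs => antitoneOn_phiF hκ hs.1 (hs.1.trans hs.2) hs.2

theorem continuousOn_QF (hκ : ContinuousOn κ (Ici 0)) : ContinuousOn (QF κ) (Ici 0) :=
  (continuousOn_PhiF hκ).div (continuousOn_phiF hκ) fun s _ => (phiF_pos κ s).ne'

theorem QF_nonneg {r : ℝ} (hr : 0 ≤ r) : 0 ≤ QF κ r :=
  div_nonneg (PhiF_nonneg hr) (phiF_pos κ r).le

theorem le_QF (hκ : ContinuousOn κ (Ici 0)) {r : ℝ} (hr : 0 ≤ r) : r ≤ QF κ r :=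
  (le_div_iff₀ (phiF_pos κ r)).2 (mul_phiF_le_PhiF hκ hr)

theorem JF_nonneg {r : ℝ} (hr : 0 ≤ r) : 0 ≤ JF κ r :=
  intervalIntegral.integral_nonneg hr fun _ hs => QF_nonneg hs.1

theorem monotoneOn_JF (hκ : ContinuousOn κ (Ici 0)) : MonotoneOn (JF κ) (Ici 0) :=
  (continuousOn_QF hκ).monotoneOn_integral_Ici fun _ => QF_nonneg

theorem sq_div_two_le_JF (hκ : ContinuousOn κ (Ici 0)) {r : ℝ} (hr : 0 ≤ r) :
    r ^ 2 / 2 ≤ JF κ r := by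
  simpa [JF, integral_id] using intervalIntegral.integral_mono_on hr
    (continuous_id.intervalIntegrable _ _)
    ((continuousOn_QF hκ).intervalIntegrable_of_Ici le_rfl hr)
    fun s hs => le_QF hκ hs.1

theorem cF_pos (hκ : ContinuousOn κ (Ici 0)) (hR1 : 0 < R1 κ) : 0 < cF κ :=
  inv_pos.2 <| (by positivity : 0 < R1 κ ^ 2 / 2).trans_le (sq_div_two_le_JF hκ hR1.le)

theorem cF_mul_JF (hκ : ContinuousOn κ (Ici 0)) (hR1 : 0 < R1 κ) : cF κ * JF κ (R1 κ) = 1 :=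
  inv_mul_cancel₀ (inv_pos.1 (cF_pos hκ hR1)).ne'

theorem gF_le_one (hκ : ContinuousOn κ (Ici 0)) (hR1 : 0 < R1 κ) {r : ℝ} (hr : 0 ≤ r) :
    gF κ r ≤ 1 := by
  have := mul_nonneg (half_pos (cF_pos hκ hR1)).le (JF_nonneg (κ := κ) (le_min hr hR1.le))
  rw [gF_eq]
  linarith

theorem half_le_gF (hκ : ContinuousOn κ (Ici 0)) (hR1 : 0 < R1 κ) {r : ℝ} (hr : 0 ≤ r) :
    1 / 2 ≤ gF κ r := by
  have := mul_le_mul_of_nonneg_left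
    (monotoneOn_JF hκ (le_min hr hR1.le) (mem_Ici.2 hR1.le) (min_le_right r (R1 κ)))
    (half_pos (cF_pos hκ hR1)).le
  rw [gF_eq]
  linarith [cF_mul_JF hκ hR1]

theorem gF_of_R1_le (hκ : ContinuousOn κ (Ici 0)) (hR1 : 0 < R1 κ) {r : ℝ} (hr : R1 κ ≤ r) :
    gF κ r = 1 / 2 := by
  rw [gF_eq, min_eq_right hr]
  linarith [cF_mul_JF hκ hR1]

theorem continuousOn_gF (hκ : ContinuousOn κ (Ici 0)) (hR1 : 0 < R1 κ) :
    ContinuousOn (gF κ) (Ici 0) :=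
  continuousOn_const.sub <| continuousOn_const.mul <|
    (continuousOn_QF hκ).continuousOn_integral_Ici.comp
      (continuous_id.min continuous_const).continuousOn fun _ hr => le_min hr hR1.le

theorem hasDerivWithinAt_gF (hκ : ContinuousOn κ (Ici 0)) {r : ℝ} (hr : 0 ≤ r)
    (hrR : r < R1 κ) : HasDerivWithinAt (gF κ) (-(cF κ / 2 * QF κ r)) (Ici 0) r := by
  refine ((((continuousOn_QF hκ).hasDerivWithinAt_integral_Ici hr).const_mul
    (cF κ / 2)).const_sub 1).congr_of_eventuallyEq ?_ ?_
  · filter_upwards [nhdsWithin_le_nhds (Iio_mem_nhds hrR)] with s hs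
    rw [gF_eq, min_eq_left (le_of_lt hs)]
    rfl
  · rw [gF_eq, min_eq_left hrR.le]
    rfl

theorem phiF_mul_gF_nonneg (hκ : ContinuousOn κ (Ici 0)) (hR1 : 0 < R1 κ) {r : ℝ}
    (hr : 0 ≤ r) : 0 ≤ phiF κ r * gF κ r :=
  mul_nonneg (phiF_pos κ r).le (by linarith [half_le_gF hκ hR1 hr])

theorem fF_nonneg (hκ : ContinuousOn κ (Ici 0)) (hR1 : 0 < R1 κ) {r : ℝ} (hr : 0 ≤ r) :
    0 ≤ fF κ r :=
  intervalIntegral.integral_nonneg hr fun _ hs => phiF_mul_gF_nonneg hκ hR1 hs.1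

theorem monotoneOn_fF (hκ : ContinuousOn κ (Ici 0)) (hR1 : 0 < R1 κ) :
    MonotoneOn (fF κ) (Ici 0) :=
  ((continuousOn_phiF hκ).mul (continuousOn_gF hκ hR1)).monotoneOn_integral_Ici
    fun _ => phiF_mul_gF_nonneg hκ hR1

theorem fF_le_PhiF (hκ : ContinuousOn κ (Ici 0)) (hR1 : 0 < R1 κ) {r : ℝ} (hr : 0 ≤ r) :
    fF κ r ≤ PhiF κ r :=
  intervalIntegral.integral_mono_on hr
    (((continuousOn_phiF hκ).mul (continuousOn_gF hκ hR1)).intervalIntegrable_of_Ici le_rfl hr)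
    ((continuousOn_phiF hκ).intervalIntegrable_of_Ici le_rfl hr)
    fun s hs => mul_le_of_le_one_right (phiF_pos κ s).le (gF_le_one hκ hR1 hs.1)

theorem R0_nonneg : 0 ≤ R0 κ := Real.sInf_nonneg fun _ hs => hs.1

-- `sInf ∅ = 0` in `ℝ`, so `0 < R₁` is what makes `R₁` a genuine infimum.
theorem nonempty_R1_set (hR1 : 0 < R1 κ) :
    {s : ℝ | R0 κ ≤ s ∧ ∀ r, s ≤ r → 8 ≤ s * (s - R0 κ) * κ r}.Nonempty := by
  by_contra h
  rw [not_nonempty_iff_eq_empty] at h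
  rw [R1, h, Real.sInf_empty] at hR1
  exact hR1.false

theorem R0_le_R1 (hR1 : 0 < R1 κ) : R0 κ ≤ R1 κ :=
  le_csInf (nonempty_R1_set hR1) fun _ hs => hs.1

theorem kappa_pos_of_eight_le {s r : ℝ} (hs : R0 κ ≤ s) (h8 : 8 ≤ s * (s - R0 κ) * κ r) :
    0 < κ r := by
  have : 0 ≤ s * (s - R0 κ) := mul_nonneg (R0_nonneg.trans hs) (sub_nonneg.2 hs)
  by_contra! hκr
  linarith [mul_nonpos_of_nonneg_of_nonpos this hκr]

theorem kappa_nonneg_of_R0_lt (hR1 : 0 < R1 κ) {t : ℝ} (ht : R0 κ < t) : 0 ≤ κ t := by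
  obtain ⟨s, ⟨hs, h8⟩⟩ := nonempty_R1_set hR1
  have hne : {s : ℝ | 0 ≤ s ∧ ∀ r, s ≤ r → 0 ≤ κ r}.Nonempty :=
    ⟨s, R0_nonneg.trans hs, fun r hr => (kappa_pos_of_eight_le hs (h8 r hr)).le⟩
  obtain ⟨s', hs', hs't⟩ := exists_lt_of_csInf_lt hne ht
  exact hs'.2 t hs't.le

theorem eight_le_of_R1_lt (hR1 : 0 < R1 κ) {r : ℝ} (hr : R1 κ < r) :
    8 ≤ R1 κ * (R1 κ - R0 κ) * κ r := by
  have hκr : 0 ≤ κ r := kappa_nonneg_of_R0_lt hR1 ((R0_le_R1 hR1).trans_lt hr)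
  have hev : ∀ᶠ s in 𝓝[>] R1 κ, 8 ≤ s * (s - R0 κ) * κ r := by
    filter_upwards [Ioo_mem_nhdsGT hr] with s hs
    obtain ⟨s', ⟨hs', h8⟩, hs's⟩ := exists_lt_of_csInf_lt (nonempty_R1_set hR1) hs.1
    have hs'0 : 0 ≤ s' := R0_nonneg.trans hs'
    calc 8 ≤ s' * (s' - R0 κ) * κ r := h8 r (hs's.le.trans hs.2.le)
      _ ≤ s * (s - R0 κ) * κ r := by gcongr; linarith
  have hcont : Continuous fun s => s * (s - R0 κ) * κ r := by fun_prop
  exact ge_of_tendsto ((hcont.tendsto _).mono_left nhdsWithin_le_nhds) hev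

theorem phiF_eq_of_R0_le (hκ : ContinuousOn κ (Ici 0)) (hR1 : 0 < R1 κ) {x : ℝ}
    (hx : R0 κ ≤ x) : phiF κ x = phiF κ (R0 κ) := by
  have h0 : 0 ≤ R0 κ := R0_nonneg
  have htail : ∫ s in R0 κ..x, s * max 0 (-κ s) = 0 := by
    rw [intervalIntegral.integral_congr_Ioo_of_le hx (g := fun _ => 0),
      intervalIntegral.integral_zero]
    intro s hs
    simp [kappa_nonneg_of_R0_lt hR1 hs.1]
  rw [phiF, phiF, ← intervalIntegral.integral_add_adjacent_intervals
    ((continuousOn_mul_max_neg hκ).intervalIntegrable_of_Ici le_rfl h0)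
    ((continuousOn_mul_max_neg hκ).intervalIntegrable_of_Ici h0 (h0.trans hx)), htail, add_zero]

theorem PhiF_eq_of_R0_le (hκ : ContinuousOn κ (Ici 0)) (hR1 : 0 < R1 κ) {x : ℝ}
    (hx : R0 κ ≤ x) : PhiF κ x = PhiF κ (R0 κ) + (x - R0 κ) * phiF κ (R0 κ) := by
  have h0 : 0 ≤ R0 κ := R0_nonneg
  have htail : ∫ s in R0 κ..x, phiF κ s = (x - R0 κ) * phiF κ (R0 κ) := by
    rw [intervalIntegral.integral_congr (g := fun _ => phiF κ (R0 κ)),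
      intervalIntegral.integral_const, smul_eq_mul]
    intro s hs
    exact phiF_eq_of_R0_le hκ hR1 (uIcc_of_le hx ▸ hs).1
  rw [PhiF, PhiF, ← intervalIntegral.integral_add_adjacent_intervals
    ((continuousOn_phiF hκ).intervalIntegrable_of_Ici le_rfl h0)
    ((continuousOn_phiF hκ).intervalIntegrable_of_Ici h0 (h0.trans hx)), htail]

theorem QF_eq_of_R0_le (hκ : ContinuousOn κ (Ici 0)) (hR1 : 0 < R1 κ) {x : ℝ}
    (hx : R0 κ ≤ x) : QF κ x = QF κ (R0 κ) + (x - R0 κ) := by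
  rw [QF, QF, PhiF_eq_of_R0_le hκ hR1 hx, phiF_eq_of_R0_le hκ hR1 hx]
  field_simp [(phiF_pos κ (R0 κ)).ne']

theorem sub_mul_QF_le_two_mul_JF (hκ : ContinuousOn κ (Ici 0)) (hR1 : 0 < R1 κ) :
    (R1 κ - R0 κ) * QF κ (R1 κ) ≤ 2 * JF κ (R1 κ) := by
  have h0 : 0 ≤ R0 κ := R0_nonneg
  have h01 : R0 κ ≤ R1 κ := R0_le_R1 hR1
  have htail : ∫ s in R0 κ..R1 κ, QF κ s
      = (R1 κ - R0 κ) * QF κ (R0 κ) + (R1 κ - R0 κ) ^ 2 / 2 := by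
    rw [intervalIntegral.integral_congr (g := fun s => QF κ (R0 κ) + (s - R0 κ))]
    · simp [intervalIntegral.integral_comp_sub_right (fun s => s), integral_id]
    · intro s hs
      exact QF_eq_of_R0_le hκ hR1 (uIcc_of_le h01 ▸ hs).1
  have hsplit := intervalIntegral.integral_add_adjacent_intervals
    ((continuousOn_QF hκ).intervalIntegrable_of_Ici le_rfl h0)
    ((continuousOn_QF hκ).intervalIntegrable_of_Ici h0 (h0.trans h01))
  change JF κ (R0 κ) + _ = JF κ (R1 κ) at hsplit
  rw [htail] at hsplit
  rw [QF_eq_of_R0_le hκ hR1 h01]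
  linarith [JF_nonneg (κ := κ) h0, mul_nonneg (sub_nonneg.2 h01) (QF_nonneg (κ := κ) h0)]

theorem four_mul_QF_le (hκ : ContinuousOn κ (Ici 0)) (hR1 : 0 < R1 κ) {r : ℝ}
    (hr : R1 κ < r) : 4 * QF κ r ≤ r * κ r * JF κ (R1 κ) := by
  have h01 : R0 κ ≤ R1 κ := R0_le_R1 hR1
  have hκr : 0 ≤ κ r := kappa_nonneg_of_R0_lt hR1 (h01.trans_lt hr)
  have hQr : QF κ r = QF κ (R1 κ) + (r - R1 κ) := by
    rw [QF_eq_of_R0_le hκ hR1 (h01.trans hr.le), QF_eq_of_R0_le hκ hR1 h01]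
    ring
  have hscale : R1 κ * QF κ r ≤ r * QF κ (R1 κ) := by
    rw [hQr]
    linarith [mul_nonneg (sub_nonneg.2 hr.le) (sub_nonneg.2 (le_QF hκ hR1.le))]
  have hrκ : 0 ≤ r * κ r := mul_nonneg (hR1.le.trans hr.le) hκr
  have : 8 * QF κ r ≤ 2 * (r * κ r * JF κ (R1 κ)) := calc
    8 * QF κ r ≤ R1 κ * (R1 κ - R0 κ) * κ r * QF κ r :=
      mul_le_mul_of_nonneg_right (eight_le_of_R1_lt hR1 hr) (QF_nonneg (by linarith))
    _ = (R1 κ - R0 κ) * κ r * (R1 κ * QF κ r) := by ring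
    _ ≤ (R1 κ - R0 κ) * κ r * (r * QF κ (R1 κ)) :=
      mul_le_mul_of_nonneg_left hscale (mul_nonneg (sub_nonneg.2 h01) hκr)
    _ = r * κ r * ((R1 κ - R0 κ) * QF κ (R1 κ)) := by ring
    _ ≤ r * κ r * (2 * JF κ (R1 κ)) :=
      mul_le_mul_of_nonneg_left (sub_mul_QF_le_two_mul_JF hκ hR1) hrκ
    _ = 2 * (r * κ r * JF κ (R1 κ)) := by ring
  linarith

theorem two_mul_cF_mul_fF_le (hκ : ContinuousOn κ (Ici 0)) (hR1 : 0 < R1 κ) {r : ℝ}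
    (hr : R1 κ < r) : 2 * cF κ * fF κ r ≤ r * κ r * (phiF κ r * gF κ r) := by
  have hJ : 0 < JF κ (R1 κ) := inv_pos.1 (cF_pos hκ hR1)
  have hf : fF κ r ≤ phiF κ r * QF κ r := by
    rw [QF, mul_div_cancel₀ _ (phiF_pos κ r).ne']
    exact fF_le_PhiF hκ hR1 (hR1.le.trans hr.le)
  have h4 : 4 * fF κ r ≤ phiF κ r * (r * κ r * JF κ (R1 κ)) := calc
    4 * fF κ r ≤ phiF κ r * (4 * QF κ r) := by linarith
    _ ≤ _ := mul_le_mul_of_nonneg_left (four_mul_QF_le hκ hR1 hr) (phiF_pos κ r).le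
  rw [gF_of_R1_le hκ hR1 hr.le, cF_eq_inv_JF, mul_comm 2, mul_assoc, inv_mul_le_iff₀ hJ]
  linear_combination h4 / 2

theorem hasDerivWithinAt_phiF_mul_gF_of_lt_R1 (hκ : ContinuousOn κ (Ici 0)) {r : ℝ}
    (hr : 0 ≤ r) (hrR : r < R1 κ) :
    HasDerivWithinAt (fun s => phiF κ s * gF κ s)
      (-(1 / 4) * (r * max 0 (-κ r)) * phiF κ r * gF κ r - cF κ / 2 * PhiF κ r) (Ici 0) r := by
  refine ((hasDerivWithinAt_phiF hκ hr).mul (hasDerivWithinAt_gF hκ hr hrR)).congr_deriv ?_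
  have := (phiF_pos κ r).ne'
  rw [QF]
  field_simp
  ring

theorem hasDerivWithinAt_phiF_mul_gF_of_R1_lt (hκ : ContinuousOn κ (Ici 0)) (hR1 : 0 < R1 κ)
    {r : ℝ} (hr : R1 κ < r) : HasDerivWithinAt (fun s => phiF κ s * gF κ s) 0 (Ici 0) r := by
  refine ((hasDerivAt_const r (phiF κ (R0 κ) * (1 / 2))).congr_of_eventuallyEq ?_
    ).hasDerivWithinAt
  filter_upwards [Ioi_mem_nhds hr] with s hs
  rw [phiF_eq_of_R0_le hκ hR1 ((R0_le_R1 hR1).trans (le_of_lt hs)),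
    gF_of_R1_le hκ hR1 (le_of_lt hs)]

theorem four_mul_deriv_mul_sq_sub_le (hκ : ContinuousOn κ (Ici 0)) (hR1 : 0 < R1 κ)
    {δ ω r χ : ℝ} (hδ : 0 ≤ δ) (hω : ∀ s ∈ Icc 0 δ, s * max 0 (-κ s) ≤ ω) (hω0 : 0 ≤ ω)
    (hr : 0 ≤ r) (hχ1 : δ ≤ r → χ = 1) :
    4 * (-(1 / 4) * (r * max 0 (-κ r)) * phiF κ r * gF κ r - cF κ / 2 * PhiF κ r) * χ ^ 2
        - r * κ r * (phiF κ r * gF κ r)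
      ≤ -2 * cF κ * fF κ r + ω + 2 * cF κ * fF κ δ := by
  have hc : 0 ≤ 2 * cF κ := by linarith [cF_pos hκ hR1]
  set m := r * max 0 (-κ r)
  set P := phiF κ r * gF κ r
  have hP0 : 0 ≤ P := phiF_mul_gF_nonneg hκ hR1 hr
  have hκm : -(r * κ r) * P ≤ m * P := mul_le_mul_of_nonneg_right
    (by rw [← mul_neg]; exact mul_le_mul_of_nonneg_left (le_max_right _ _) hr) hP0
  have hLHS :
      4 * (-(1 / 4) * m * phiF κ r * gF κ r - cF κ / 2 * PhiF κ r) * χ ^ 2 - r * κ r * P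
        = -((m * P + 2 * cF κ * PhiF κ r) * χ ^ 2) + -(r * κ r) * P := by ring
  rw [hLHS]
  rcases le_or_gt δ r with hδr | hrδ
  · have hfΦ := mul_le_mul_of_nonneg_left (fF_le_PhiF hκ hR1 hr) hc
    have hfδ := mul_nonneg hc (fF_nonneg hκ hR1 hδ)
    rw [hχ1 hδr, one_pow, mul_one]
    linarith
  · have hP1 : P ≤ 1 :=
      mul_le_one₀ (phiF_le_one hκ hr) (by linarith [half_le_gF hκ hR1 hr]) (gF_le_one hκ hR1 hr)
    have hmP := mul_le_of_le_one_right (mul_max_neg_nonneg (κ := κ) hr) hP1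
    have hmω : m ≤ ω := hω r ⟨hr, hrδ.le⟩
    have hf := mul_le_mul_of_nonneg_left (monotoneOn_fF hκ hR1 hr hδ hrδ.le) hc
    have hsq : 0 ≤ (m * P + 2 * cF κ * PhiF κ r) * χ ^ 2 := mul_nonneg
      (add_nonneg (mul_nonneg (mul_max_neg_nonneg hr) hP0) (mul_nonneg hc (PhiF_nonneg hr)))
      (sq_nonneg χ)
    linarith

theorem le_sSup_image_mul_max_neg (hκ : ContinuousOn κ (Ici 0)) {δ s : ℝ} (hs : s ∈ Icc 0 δ) :
    s * max 0 (-κ s) ≤ sSup ((fun s => s * max 0 (-κ s)) '' Icc 0 δ) :=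
  le_csSup (isCompact_Icc.image_of_continuousOn
    ((continuousOn_mul_max_neg hκ).mono Icc_subset_Ici_self)).bddAbove (mem_image_of_mem _ hs)

theorem sSup_image_mul_max_neg_nonneg (δ : ℝ) :
    0 ≤ sSup ((fun s => s * max 0 (-κ s)) '' Icc 0 δ) :=
  Real.sSup_nonneg (by rintro _ ⟨s, hs, rfl⟩; exact mul_max_neg_nonneg hs.1)

end Profile

theorem stmt15_general (κ : ℝ → ℝ) (hκcont : ContinuousOn κ (Set.Ici 0))
    (hR1 : 0 < R1 κ)
    (δ : ℝ) (hδ : 0 < δ) :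
    ∀ r : ℝ, 0 ≤ r → r ≠ R1 κ → ∀ χ : ℝ, χ ∈ Set.Icc (0:ℝ) 1 → (δ ≤ r → χ = 1) →
      ∀ f2 : ℝ, HasDerivWithinAt (fun s => phiF κ s * gF κ s) f2 (Set.Ici 0) r →
        4 * f2 * χ ^ 2 - r * κ r * (phiF κ r * gF κ r)
          ≤ -2 * cF κ * fF κ r
            + sSup ((fun s => s * max 0 (-κ s)) '' Set.Icc 0 δ) + 2 * cF κ * fF κ δ := by
  intro r hr hrR χ _ hχ1 f2 hf2
  have hω0 := sSup_image_mul_max_neg_nonneg (κ := κ) δ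
  have hunique := uniqueDiffOn_Ici (0 : ℝ) r hr
  rcases hrR.lt_or_gt with hlt | hgt
  · rw [hunique.eq_deriv _ hf2 (hasDerivWithinAt_phiF_mul_gF_of_lt_R1 hκcont hr hlt)]
    exact four_mul_deriv_mul_sq_sub_le hκcont hR1 hδ.le
      (fun _ hs => le_sSup_image_mul_max_neg hκcont hs) hω0 hr hχ1
  · rw [hunique.eq_deriv _ hf2 (hasDerivWithinAt_phiF_mul_gF_of_R1_lt hκcont hR1 hgt)]
    have := two_mul_cF_mul_fF_le hκcont hR1 hgt
    have := mul_nonneg (cF_pos hκcont hR1).le (fF_nonneg hκcont hR1 hδ.le)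
    linarith

/-- with `ω(δ) = sup_{s ∈ [0,δ]} s κ₋(s)`, for every `r ≥ 0` with `r ≠ R₁`
(where `f` is twice differentiable within `[0,∞)`, with `f'(r) = φ(r) g(r)` and second
derivative `f''(r)`) and every `χ ∈ [0,1]` with `χ = 1` whenever `r ≥ δ`, one has
`4 f''(r) χ² − r κ(r) f'(r) ≤ −2c f(r) + ω(δ) + 2c f(δ)`. -/
theorem stmt15 (κ : ℝ → ℝ) (hκcont : ContinuousOn κ (Set.Ici 0))
    (hκliminf : ∃ ε > (0 : ℝ), ∃ R : ℝ, ∀ r ≥ R, ε ≤ κ r) (hR1 : 0 < R1 κ)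
    (δ : ℝ) (hδ : 0 < δ) :
    ∀ r : ℝ, 0 ≤ r → r ≠ R1 κ → ∀ χ : ℝ, χ ∈ Set.Icc (0:ℝ) 1 → (δ ≤ r → χ = 1) →
      ∀ f2 : ℝ, HasDerivWithinAt (fun s => phiF κ s * gF κ s) f2 (Set.Ici 0) r →
        4 * f2 * χ ^ 2 - r * κ r * (phiF κ r * gF κ r)
          ≤ -2 * cF κ * fF κ r
            + sSup ((fun s => s * max 0 (-κ s)) '' Set.Icc 0 δ) + 2 * cF κ * fF κ δ :=
  stmt15_general κ hκcont hR1 δ hδ
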